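/- arXiv:1704.07764 — 4 statements merged into one kernel-verified Lean document; each statement's English description precedes it below -/
import Mathlib

section
/- For every integer n ≥ 1, the set Pₙ of nonzero n-th powers in ℚ_p (i.e., {x ∈ ℚ_p : x ≠ 0 and x = yⁿ for some y ∈ ℚ_p}) is a subgroup of the multiplicative group ℚ_pˣ which is open as a subset of ℚ_p and has finite index in ℚ_pˣ. -/
/-!
Hensel's lemma for `X ^ n - a` at `1` shows that every `a` with `‖a - 1‖ < ‖n‖ ^ 2` is an `n`-th
power, so the `n`-th powers form an open subgroup of `ℚ_pˣ`. Writing `x = u p ^ v` with `u` a unit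
of `ℤ_p` and reducing `v` modulo `n`, every coset of this subgroup meets the compact set
`ℤ_pˣ · {1, p, …, p ^ (n - 1)}`; since the quotient by an open subgroup is discrete, it is finite.
-/

open Polynomial Metric

section CommGroupWithZero

variable {G₀ : Type*} [CommGroupWithZero G₀] {n : ℕ}

theorem Units.mem_range_powMonoidHom_iff (u : G₀ˣ) :
    u ∈ (powMonoidHom n : G₀ˣ →* G₀ˣ).range ↔ ∃ y : G₀, (u : G₀) = y ^ n := by
  refine ⟨fun ⟨v, hv⟩ ↦ ⟨v, by simp [← hv]⟩, fun ⟨y, hy⟩ ↦ ?_⟩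
  rcases eq_or_ne y 0 with rfl | hy0
  · obtain rfl : n = 0 := by
      by_contra hn
      exact u.ne_zero (by rw [hy, zero_pow hn])
    exact ⟨1, Units.ext (by simp [hy])⟩
  · exact ⟨Units.mk0 y hy0, Units.ext (by simp [hy])⟩

theorem Units.image_val_range_powMonoidHom :
    Units.val '' ((powMonoidHom n : G₀ˣ →* G₀ˣ).range : Set G₀ˣ) =
      {x : G₀ | x ≠ 0 ∧ ∃ y : G₀, x = y ^ n} := by
  ext x
  constructor
  · rintro ⟨u, hu, rfl⟩
    exact ⟨u.ne_zero, (Units.mem_range_powMonoidHom_iff u).mp hu⟩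
  · rintro ⟨hx, hy⟩
    exact ⟨Units.mk0 x hx, (Units.mem_range_powMonoidHom_iff _).mpr hy, rfl⟩

end CommGroupWithZero

theorem Subgroup.finiteIndex_of_isOpen_of_isCompact {G : Type*} [Group G] [TopologicalSpace G]
    [IsTopologicalGroup G] {H : Subgroup G} (hH : IsOpen (H : Set G)) {K : Set G}
    (hK : IsCompact K) (hKH : ∀ g : G, ∃ k ∈ K, k⁻¹ * g ∈ H) : H.FiniteIndex := by
  have := QuotientGroup.discreteTopology hH
  have hfin : ((↑) '' K : Set (G ⧸ H)).Finite :=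
    (hK.image QuotientGroup.continuous_mk).finite_of_discrete
  have huniv : ((↑) '' K : Set (G ⧸ H)) = Set.univ :=
    Set.eq_univ_of_forall <| QuotientGroup.forall_mk.mpr fun g ↦
      let ⟨k, hk, hkg⟩ := hKH g
      ⟨k, hk, QuotientGroup.eq.mpr hkg⟩
  have : Finite (G ⧸ H) := Set.finite_univ_iff.mp (huniv ▸ hfin)
  exact H.finiteIndex_of_finite_quotient

namespace PadicInt

variable {p : ℕ} [Fact p.Prime]

theorem exists_pow_eq_of_norm_sub_one_lt {n : ℕ} {a : ℤ_[p]}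
    (ha : ‖a - 1‖ < ‖(n : ℤ_[p])‖ ^ 2) : ∃ b : ℤ_[p], b ^ n = a := by
  have hF : ‖(X ^ n - C a : ℤ_[p][X]).eval 1‖ <
      ‖(derivative (X ^ n - C a : ℤ_[p][X])).eval 1‖ ^ 2 := by
    simpa [norm_sub_rev, derivative_X_pow] using ha
  obtain ⟨b, hb, -⟩ := hensels_lemma hF
  exact ⟨b, sub_eq_zero.mp (by simpa using hb)⟩

end PadicInt

namespace Padic

variable {p : ℕ} [Fact p.Prime]

theorem exists_pow_eq_of_norm_sub_one_lt {n : ℕ} {a : ℚ_[p]}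
    (ha : ‖a - 1‖ < ‖(n : ℚ_[p])‖ ^ 2) : ∃ b : ℚ_[p], b ^ n = a := by
  have hn : ‖(n : ℚ_[p])‖ ≤ 1 := by exact_mod_cast norm_int_le_one (p := p) n
  have ha1 : ‖a‖ ≤ 1 :=
    calc ‖a‖ = ‖a - 1 + 1‖ := by rw [sub_add_cancel]
      _ ≤ max ‖a - 1‖ ‖(1 : ℚ_[p])‖ := nonarchimedean _ _
      _ ≤ 1 := max_le (ha.le.trans (pow_le_one₀ (norm_nonneg _) hn)) norm_one.le
  obtain ⟨b, hb⟩ := PadicInt.exists_pow_eq_of_norm_sub_one_lt (a := ⟨a, ha1⟩) (n := n)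
    (by rw [PadicInt.norm_def, PadicInt.norm_def]; push_cast; exact ha)
  exact ⟨b, by simpa using congrArg ((↑) : ℤ_[p] → ℚ_[p]) hb⟩

theorem isOpen_range_powMonoidHom_units {n : ℕ} (hn : n ≠ 0) :
    IsOpen ((powMonoidHom n : ℚ_[p]ˣ →* ℚ_[p]ˣ).range : Set ℚ_[p]ˣ) := by
  refine Subgroup.isOpen_of_mem_nhds _ (g := 1) ?_
  have hr : 0 < ‖(n : ℚ_[p])‖ ^ 2 := by
    have : (n : ℚ_[p]) ≠ 0 := Nat.cast_ne_zero.mpr hn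
    positivity
  refine Filter.mem_of_superset
    (Units.continuous_val.continuousAt.preimage_mem_nhds (ball_mem_nhds 1 hr)) ?_
  intro u hu
  rw [Set.mem_preimage, mem_ball, dist_eq_norm] at hu
  obtain ⟨b, hb⟩ := exists_pow_eq_of_norm_sub_one_lt hu
  exact (Units.mem_range_powMonoidHom_iff u).mpr ⟨b, hb.symm⟩

theorem exists_unitsMap_mul_zpow_eq (x : ℚ_[p]ˣ) :
    ∃ (u : ℤ_[p]ˣ) (v : ℤ), Units.map (PadicInt.Coe.ringHom (p := p)).toMonoidHom u *
      Units.mk0 (p : ℚ_[p]) (NeZero.ne _) ^ v = x := by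
  have hp : (p : ℚ_[p]) ≠ 0 := NeZero.ne _
  have hu : ‖(x : ℚ_[p]) * p ^ (-x.val.valuation)‖ = 1 := by
    rw [norm_mul, norm_eq_zpow_neg_valuation x.ne_zero, norm_p_zpow, neg_neg,
      ← zpow_add₀ (by exact_mod_cast (Fact.out : p.Prime).ne_zero), neg_add_cancel, zpow_zero]
  refine ⟨PadicInt.mkUnits hu, x.val.valuation, Units.ext ?_⟩
  rw [Units.val_mul, Units.val_zpow_eq_zpow_val]
  change (x : ℚ_[p]) * p ^ (-x.val.valuation) * (p : ℚ_[p]) ^ x.val.valuation = x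
  rw [mul_assoc, ← zpow_add₀ hp, neg_add_cancel, zpow_zero, mul_one]

theorem finiteIndex_of_isOpen_of_pow_mem {H : Subgroup ℚ_[p]ˣ} (hH : IsOpen (H : Set ℚ_[p]ˣ))
    {n : ℕ} (hn : n ≠ 0) (hpn : Units.mk0 (p : ℚ_[p]) (NeZero.ne _) ^ n ∈ H) :
    H.FiniteIndex := by
  set π : ℚ_[p]ˣ := Units.mk0 (p : ℚ_[p]) (NeZero.ne _)
  set ι : ℤ_[p]ˣ →* ℚ_[p]ˣ := Units.map (PadicInt.Coe.ringHom (p := p)).toMonoidHom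
  have hι : Continuous ι := Units.continuous_map PadicInt.isOpenEmbedding_coe.continuous
  refine Subgroup.finiteIndex_of_isOpen_of_isCompact hH
    (K := Set.range fun x : ℤ_[p]ˣ × Fin n ↦ ι x.1 * π ^ (x.2 : ℕ))
    (isCompact_range ((hι.comp continuous_fst).mul
      ((continuous_of_discreteTopology (f := fun i : Fin n ↦ π ^ (i : ℕ))).comp
        continuous_snd))) fun g ↦ ?_
  obtain ⟨u, v, rfl⟩ := exists_unitsMap_mul_zpow_eq g
  have hn' : (0 : ℤ) < n := by omega
  have hlt : v % n < n := Int.emod_lt_of_pos v hn'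
  refine ⟨_, ⟨(u, ⟨(v % n).toNat, by omega⟩), rfl⟩, ?_⟩
  convert H.zpow_mem hpn (v / n) using 1
  change (ι u * π ^ (v % n).toNat)⁻¹ * (ι u * π ^ v) = _
  rw [← zpow_natCast, Int.toNat_of_nonneg (Int.emod_nonneg v hn'.ne'), ← zpow_natCast,
    ← zpow_mul, Int.emod_def]
  group

end Padic

/-- For every integer `n ≥ 1`, the set of nonzero `n`-th powers in `ℚ_p` forms a subgroup of
`ℚ_pˣ` which is open as a subset of `ℚ_p` and has finite index in `ℚ_pˣ`. -/
theorem nth_powers_open_finite_index_subgroup (p : ℕ) [Fact p.Prime] (n : ℕ) (hn : 1 ≤ n) :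
    ∃ H : Subgroup ℚ_[p]ˣ,
      (∀ x : ℚ_[p]ˣ, x ∈ H ↔ ∃ y : ℚ_[p], (x : ℚ_[p]) = y ^ n) ∧
      IsOpen {x : ℚ_[p] | x ≠ 0 ∧ ∃ y : ℚ_[p], x = y ^ n} ∧
      H.FiniteIndex := by
  have hn0 : n ≠ 0 := by omega
  have hopen := Padic.isOpen_range_powMonoidHom_units (p := p) hn0
  refine ⟨(powMonoidHom n).range, Units.mem_range_powMonoidHom_iff, ?_,
    Padic.finiteIndex_of_isOpen_of_pow_mem hopen hn0 ⟨_, rfl⟩⟩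
  rw [← Units.image_val_range_powMonoidHom]
  exact Units.isOpenMap_val _ hopen
end

section
/- Let f(X) = a₀ + a₁X + ⋯ + a_mX^m be a polynomial with coefficients in ℚ_p whose leading coefficient a_m is nonzero, and let n ≥ 1 be an integer. Then there exists N > 0 such that for every c ∈ ℚ_p with ‖c‖ > N, the value f(c) is nonzero and f(c)/(a_m·c^m) is an n-th power in ℚ_p. (This is the key step in the proof of completeness of the types p_{∞,C} in Lemma 2.1: for c of sufficiently large norm, f(c) lies in the same coset of the n-th powers as a_m·c^m.) -/
/-!
By Hensel's lemma every `p`-adic number close enough to `1` is an `n`-th power, and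
`f(c) / (a_m c^m) → 1` as `‖c‖ → ∞` since `f` is asymptotically equivalent to its leading
monomial.
-/

open Filter Topology Bornology Polynomial Asymptotics

theorem PadicInt.exists_pow_eq_of_norm_sub_one_lt_s6 {p : ℕ} [Fact p.Prime] {n : ℕ} {x : ℤ_[p]}
    (hx : ‖x - 1‖ < ‖(n : ℤ_[p])‖ ^ 2) : ∃ z : ℤ_[p], x = z ^ n := by
  have hnorm : ‖(X ^ n - C x).aeval (1 : ℤ_[p])‖ <
      ‖(X ^ n - C x).derivative.aeval (1 : ℤ_[p])‖ ^ 2 := by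
    simpa [norm_sub_rev, derivative_X_pow] using hx
  obtain ⟨z, hz, -⟩ := hensels_lemma hnorm
  exact ⟨z, by simpa [sub_eq_zero, eq_comm] using hz⟩

theorem Padic.eventually_nhds_one_exists_pow_eq {p : ℕ} [Fact p.Prime] {n : ℕ} (hn : n ≠ 0) :
    ∀ᶠ x in 𝓝 (1 : ℚ_[p]), ∃ y : ℚ_[p], x = y ^ n := by
  have hn_pos : 0 < ‖(n : ℤ_[p])‖ ^ 2 := by
    have : (n : ℤ_[p]) ≠ 0 := Nat.cast_ne_zero.2 hn
    positivity
  filter_upwards [Metric.ball_mem_nhds 1 hn_pos] with x hx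
  rw [Metric.mem_ball, dist_eq_norm] at hx
  have hx_le_one : ‖x‖ ≤ 1 :=
    calc ‖x‖ = ‖(x - 1) + 1‖ := by rw [sub_add_cancel]
      _ ≤ max ‖x - 1‖ ‖(1 : ℚ_[p])‖ := Padic.nonarchimedean _ _
      _ ≤ 1 := max_le (hx.le.trans (pow_le_one₀ (norm_nonneg _) (PadicInt.norm_le_one _)))
        norm_one.le
  obtain ⟨z, hz⟩ :=
    PadicInt.exists_pow_eq_of_norm_sub_one_lt_s6 (n := n) (x := ⟨x, hx_le_one⟩) hx
  exact ⟨z, by simpa using congrArg ((↑) : ℤ_[p] → ℚ_[p]) hz⟩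

theorem Polynomial.tendsto_eval_div_leading_monomial_cobounded {K : Type*} [NormedField K]
    (f : K[X]) (hf : f ≠ 0) :
    Tendsto (fun c ↦ f.eval c / (f.leadingCoeff * c ^ f.natDegree)) (cobounded K) (𝓝 1) := by
  have hmonomial_ne_zero : ∀ᶠ c in cobounded K, f.leadingCoeff * c ^ f.natDegree ≠ 0 := by
    filter_upwards [eventually_cobounded_le_norm 1] with c hc
    have hc : c ≠ 0 := norm_pos_iff.1 (one_pos.trans_le hc)
    exact mul_ne_zero (leadingCoeff_ne_zero.2 hf) (pow_ne_zero _ hc)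
  exact (isEquivalent_iff_tendsto_one hmonomial_ne_zero).1 isEquivalent_cobounded_leading_monomial

/-- Key step in completeness of the types `p_{∞,C}`: for a nonzero polynomial `f` with
leading coefficient `a_m` and degree `m`, for all `c` of sufficiently large norm, `f(c) ≠ 0`
and `f(c)/(a_m·c^m)` is an `n`-th power. -/
theorem polynomial_eval_at_infinity_same_coset (p : ℕ) [Fact p.Prime]
    (f : Polynomial ℚ_[p]) (hf : f ≠ 0) (n : ℕ) (hn : 1 ≤ n) :
    ∃ N : ℝ, 0 < N ∧ ∀ c : ℚ_[p], N < ‖c‖ →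
      f.eval c ≠ 0 ∧
      ∃ y : ℚ_[p], f.eval c / (f.leadingCoeff * c ^ f.natDegree) = y ^ n := by
  have hratio := f.tendsto_eval_div_leading_monomial_cobounded hf
  have heventually : ∀ᶠ c in cobounded ℚ_[p], f.eval c ≠ 0 ∧
      ∃ y : ℚ_[p], f.eval c / (f.leadingCoeff * c ^ f.natDegree) = y ^ n := by
    filter_upwards [hratio.eventually_ne one_ne_zero,
      hratio.eventually (Padic.eventually_nhds_one_exists_pow_eq (Nat.one_le_iff_ne_zero.1 hn))]
      with c hne hpow
    exact ⟨(div_ne_zero_iff.1 hne).1, hpow⟩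
  obtain ⟨N, -, hN⟩ := hasBasis_cobounded_norm.eventually_iff.1 heventually
  exact ⟨max N 1, by positivity, fun c hc ↦ hN (le_max_left N 1 |>.trans hc.le)⟩
end

section
/- (Iwasawa decomposition of SL(2,ℚ_p).) Every matrix A ∈ SL(2,ℚ_p) can be written as A = H·T where H ∈ SL(2,ℚ_p) is upper triangular (its lower-left entry is 0) and T ∈ SL(2,ℤ_p); likewise A can be written as A = T'·H' with T' ∈ SL(2,ℤ_p) and H' ∈ SL(2,ℚ_p) upper triangular. That is, SL(2,ℚ_p) = B(ℚ_p)·SL(2,ℤ_p) = SL(2,ℤ_p)·B(ℚ_p). -/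
/-!
Write the bottom row of `A` as `(c, d)` and divide it by whichever entry has the larger norm:
this gives a row `(c/d, 1)` or `(1, d/c)` with entries of norm at most one, which completes to
an integral `T ∈ SL(2)`. Since the bottom row of `A` is a multiple of that of `T`, the matrix
`A T⁻¹` is upper triangular. Applying this to `A⁻¹` and inverting gives the factorization in the
other order, as inversion in `SL(2)` preserves both integrality and upper triangularity.
-/

open scoped MatrixGroups

namespace Matrix.SpecialLinearGroup

theorem inv_apply_one_zero {R : Type*} [CommRing R] (A : SL(2, R)) :
    (↑A⁻¹ : Matrix (Fin 2) (Fin 2) R) 1 0 = -(A : Matrix (Fin 2) (Fin 2) R) 1 0 := by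
  simp [SL2_inv_expl]

theorem norm_inv_apply_le_one {R : Type*} [NormedCommRing R] {A : SL(2, R)}
    (hA : ∀ i j, ‖(A : Matrix (Fin 2) (Fin 2) R) i j‖ ≤ 1) (i j : Fin 2) :
    ‖(↑A⁻¹ : Matrix (Fin 2) (Fin 2) R) i j‖ ≤ 1 := by
  fin_cases i <;> fin_cases j <;> simpa [SL2_inv_expl] using hA _ _

variable {𝕜 : Type*} [NormedField 𝕜]

theorem exists_norm_le_one_bottomRow_proportional (c d : 𝕜) :
    ∃ T : SL(2, 𝕜), (∀ i j, ‖(T : Matrix (Fin 2) (Fin 2) 𝕜) i j‖ ≤ 1) ∧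
      c * (T : Matrix (Fin 2) (Fin 2) 𝕜) 1 1 = d * (T : Matrix (Fin 2) (Fin 2) 𝕜) 1 0 := by
  rcases le_total ‖c‖ ‖d‖ with hcd | hdc
  · refine ⟨⟨!![1, 0; c / d, 1], by simp⟩, ?_, ?_⟩
    · intro i j
      fin_cases i <;> fin_cases j <;> simp [norm_div, div_le_one_of_le₀ hcd (norm_nonneg d)]
    · rcases eq_or_ne d 0 with rfl | hd
      · simpa using hcd
      · simp [mul_div_cancel₀ c hd]
  · refine ⟨⟨!![0, -1; 1, d / c], by simp⟩, ?_, ?_⟩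
    · intro i j
      fin_cases i <;> fin_cases j <;> simp [norm_div, div_le_one_of_le₀ hdc (norm_nonneg c)]
    · rcases eq_or_ne c 0 with rfl | hc
      · simpa [eq_comm] using hdc
      · simp [mul_div_cancel₀ d hc]

theorem exists_upperTriangular_mul_norm_le_one (A : SL(2, 𝕜)) :
    ∃ H T : SL(2, 𝕜), (H : Matrix (Fin 2) (Fin 2) 𝕜) 1 0 = 0 ∧
      (∀ i j, ‖(T : Matrix (Fin 2) (Fin 2) 𝕜) i j‖ ≤ 1) ∧ A = H * T := by
  obtain ⟨T, hT, hrow⟩ := exists_norm_le_one_bottomRow_proportional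
    ((A : Matrix (Fin 2) (Fin 2) 𝕜) 1 0) ((A : Matrix (Fin 2) (Fin 2) 𝕜) 1 1)
  refine ⟨A * T⁻¹, T, ?_, hT, by group⟩
  simp [coe_mul, coe_inv, adjugate_fin_two, mul_apply, Fin.sum_univ_two, hrow]

theorem exists_norm_le_one_mul_upperTriangular (A : SL(2, 𝕜)) :
    ∃ T H : SL(2, 𝕜), (∀ i j, ‖(T : Matrix (Fin 2) (Fin 2) 𝕜) i j‖ ≤ 1) ∧
      (H : Matrix (Fin 2) (Fin 2) 𝕜) 1 0 = 0 ∧ A = T * H := by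
  obtain ⟨H, T, hH, hT, hA⟩ := exists_upperTriangular_mul_norm_le_one A⁻¹
  refine ⟨T⁻¹, H⁻¹, norm_inv_apply_le_one hT, by simp [inv_apply_one_zero, hH], ?_⟩
  rw [← inv_inv A, hA, _root_.mul_inv_rev]

end Matrix.SpecialLinearGroup

/-- Iwasawa decomposition of `SL(2,ℚ_p)`: every `A ∈ SL(2,ℚ_p)` factors as `A = H·T` with
`H` upper triangular and `T ∈ SL(2,ℤ_p)`, and also as `A = T'·H'` with `T' ∈ SL(2,ℤ_p)` and
`H'` upper triangular. -/
theorem iwasawa_decomposition_SL2_Qp (p : ℕ) [Fact p.Prime]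
    (A : Matrix.SpecialLinearGroup (Fin 2) ℚ_[p]) :
    (∃ H T : Matrix.SpecialLinearGroup (Fin 2) ℚ_[p],
      (H : Matrix (Fin 2) (Fin 2) ℚ_[p]) 1 0 = 0 ∧
      (∀ i j, ‖(T : Matrix (Fin 2) (Fin 2) ℚ_[p]) i j‖ ≤ 1) ∧
      A = H * T) ∧
    (∃ T' H' : Matrix.SpecialLinearGroup (Fin 2) ℚ_[p],
      (∀ i j, ‖(T' : Matrix (Fin 2) (Fin 2) ℚ_[p]) i j‖ ≤ 1) ∧
      (H' : Matrix (Fin 2) (Fin 2) ℚ_[p]) 1 0 = 0 ∧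
      A = T' * H') :=
  ⟨A.exists_upperTriangular_mul_norm_le_one, A.exists_norm_le_one_mul_upperTriangular⟩
end

section
/- (Lemma 3.5, matrix factorization with norm estimate.) Let u = [[u₁,u₂],[u₃,u₄]] ∈ SL(2,ℤ_p) with u₃ ≠ 0, let a ∈ ℚ_p with a ≠ 0, and let c ∈ ℚ_p satisfy ‖c·u₃‖ > ‖a·u₁‖. Set D = a·u₁ + c·u₃ and e = a⁻¹·u₃/D. Then D ≠ 0, the factorization [[a,c],[0,a⁻¹]]·u = [[1,0],[e,1]]·[[D, a·u₂ + c·u₄],[0,D⁻¹]] holds in SL(2,ℚ_p), and ‖e‖ = 1/(‖a‖·‖c‖). -/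
/-! Comparing entries, the factorization reduces to a single identity in the lower right corner,
which is the determinant condition `u₁u₄ - u₂u₃ = 1`. For the norm, the ultrametric inequality is
an equality when the summands have different norms, so `‖D‖ = ‖c u₃‖` and
`‖e‖ = ‖u₃‖ / (‖a‖ ‖c‖ ‖u₃‖)`. -/

theorem Matrix.upper_mul_eq_lowerUnipotent_mul_upper {K : Type*} [Field K]
    {u₁ u₂ u₃ u₄ a c : K} (hdet : u₁ * u₄ - u₂ * u₃ = 1) (ha : a ≠ 0)
    (hD : a * u₁ + c * u₃ ≠ 0) :
    !![a, c; 0, a⁻¹] * !![u₁, u₂; u₃, u₄] =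
      !![1, 0; a⁻¹ * u₃ / (a * u₁ + c * u₃), 1] *
        !![a * u₁ + c * u₃, a * u₂ + c * u₄; 0, (a * u₁ + c * u₃)⁻¹] := by
  generalize hD_def : a * u₁ + c * u₃ = D at hD ⊢
  have h₂₂ : a⁻¹ * u₄ = a⁻¹ * u₃ / D * (a * u₂ + c * u₄) + D⁻¹ := by
    field_simp
    linear_combination a * hdet - u₄ * hD_def
  simp [hD, h₂₂, hD_def]

lemma norm_add_eq_right_of_norm_lt {S : Type*} [SeminormedAddGroup S] [IsUltrametricDist S]
    {x y : S} (h : ‖x‖ < ‖y‖) : ‖x + y‖ = ‖y‖ := by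
  rw [IsUltrametricDist.norm_add_eq_max_of_norm_ne_norm h.ne, max_eq_right h.le]

lemma add_ne_zero_of_norm_lt {G : Type*} [NormedAddGroup G] [IsUltrametricDist G] {x y : G}
    (h : ‖x‖ < ‖y‖) : x + y ≠ 0 :=
  norm_pos_iff.1 <| norm_add_eq_right_of_norm_lt h ▸ (norm_nonneg x).trans_lt h

lemma norm_inv_mul_div_add_of_norm_lt {K : Type*} [NormedField K] [IsUltrametricDist K]
    {a c u₁ u₃ : K} (hu₃ : u₃ ≠ 0) (h : ‖a * u₁‖ < ‖c * u₃‖) :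
    ‖a⁻¹ * u₃ / (a * u₁ + c * u₃)‖ = 1 / (‖a‖ * ‖c‖) := by
  have hc : c ≠ 0 := by
    rintro rfl
    rw [zero_mul, norm_zero] at h
    exact (norm_nonneg _).not_gt h
  rw [norm_div, norm_mul, norm_inv, norm_add_eq_right_of_norm_lt h, norm_mul]
  field_simp [norm_ne_zero_iff.2 hc, norm_ne_zero_iff.2 hu₃]

theorem borel_times_SL2Zp_factorization_general (p : ℕ) [Fact p.Prime]
    (u₁ u₂ u₃ u₄ a c : ℚ_[p])
    (hdet : u₁ * u₄ - u₂ * u₃ = 1)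
    (hu₃ne : u₃ ≠ 0) (ha : a ≠ 0) (hnorm : ‖a * u₁‖ < ‖c * u₃‖) :
    a * u₁ + c * u₃ ≠ 0 ∧
    (!![a, c; 0, a⁻¹] * !![u₁, u₂; u₃, u₄] : Matrix (Fin 2) (Fin 2) ℚ_[p]) =
      !![1, 0; a⁻¹ * u₃ / (a * u₁ + c * u₃), 1] *
        !![a * u₁ + c * u₃, a * u₂ + c * u₄; 0, (a * u₁ + c * u₃)⁻¹] ∧
    ‖a⁻¹ * u₃ / (a * u₁ + c * u₃)‖ = 1 / (‖a‖ * ‖c‖) := by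
  have hD := add_ne_zero_of_norm_lt hnorm
  exact ⟨hD, Matrix.upper_mul_eq_lowerUnipotent_mul_upper hdet ha hD,
    norm_inv_mul_div_add_of_norm_lt hu₃ne hnorm⟩

/-- Lemma 3.5, matrix factorization with norm estimate: for `u ∈ SL(2,ℤ_p)` with `u₃ ≠ 0`,
`a ≠ 0` and `‖c·u₃‖ > ‖a·u₁‖`, with `D = a·u₁ + c·u₃` and `e = a⁻¹·u₃/D` one has `D ≠ 0`,
`[[a,c],[0,a⁻¹]]·u = [[1,0],[e,1]]·[[D, a·u₂+c·u₄],[0,D⁻¹]]` and `‖e‖ = 1/(‖a‖·‖c‖)`. -/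
theorem borel_times_SL2Zp_factorization (p : ℕ) [Fact p.Prime]
    (u₁ u₂ u₃ u₄ a c : ℚ_[p])
    (hdet : u₁ * u₄ - u₂ * u₃ = 1)
    (hu₁ : ‖u₁‖ ≤ 1) (hu₂ : ‖u₂‖ ≤ 1) (hu₃ : ‖u₃‖ ≤ 1) (hu₄ : ‖u₄‖ ≤ 1)
    (hu₃ne : u₃ ≠ 0) (ha : a ≠ 0) (hnorm : ‖a * u₁‖ < ‖c * u₃‖) :
    a * u₁ + c * u₃ ≠ 0 ∧
    (!![a, c; 0, a⁻¹] * !![u₁, u₂; u₃, u₄] : Matrix (Fin 2) (Fin 2) ℚ_[p]) =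
      !![1, 0; a⁻¹ * u₃ / (a * u₁ + c * u₃), 1] *
        !![a * u₁ + c * u₃, a * u₂ + c * u₄; 0, (a * u₁ + c * u₃)⁻¹] ∧
    ‖a⁻¹ * u₃ / (a * u₁ + c * u₃)‖ = 1 / (‖a‖ * ‖c‖) :=
  borel_times_SL2Zp_factorization_general p u₁ u₂ u₃ u₄ a c hdet hu₃ne ha hnorm
end
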